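/- arXiv:2211.08574 — 8 statements merged into one kernel-verified Lean document; each statement's English description precedes it below -/
import Mathlib

section
/- Let N and 𝒩 be positive integers. Let K, L, C be N×N complex matrices and M an N×N complex matrix such that K and L are invertible, C + M is invertible, the Sylvester equation K·M − M·L = r·sᵀ holds for given N×𝒩 complex matrices r and s, and K·C = C·L. For integers i, j define the 𝒩×𝒩 matrix S^{(i,j)} := sᵀ · L^j · (C+M)⁻¹ · K^i · r, where negative powers are taken via the matrix inverses of K and L. Then for all integers i, j one has S^{(i+1,j)} − S^{(i,j+1)} = S^{(0,j)} · S^{(i,0)}. -/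
open Matrix

theorem stmt_0 (N Nc : ℕ) (hN : 0 < N) (hNc : 0 < Nc)
    (K L C M : Matrix (Fin N) (Fin N) ℂ)
    (r s : Matrix (Fin N) (Fin Nc) ℂ)
    (hK : IsUnit K.det) (hL : IsUnit L.det) (hCM : IsUnit (C + M).det)
    (hSyl : K * M - M * L = r * sᵀ)
    (hKC : K * C = C * L)
    (S : ℤ → ℤ → Matrix (Fin Nc) (Fin Nc) ℂ)
    (hS : ∀ i j : ℤ, S i j = sᵀ * (L ^ j) * (C + M)⁻¹ * (K ^ i) * r) :
    ∀ i j : ℤ, S (i + 1) j - S i (j + 1) = S 0 j * S i 0 := by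
  intro i j
  set A := C + M with hA
  have h1 : K * A - A * L = r * sᵀ := by
    rw [hA, mul_add, add_mul, hKC, ← hSyl]; abel
  have hAA : A * A⁻¹ = 1 := mul_nonsing_inv A hCM
  have hAA' : A⁻¹ * A = 1 := nonsing_inv_mul A hCM
  have hkey : A⁻¹ * K = L * A⁻¹ + A⁻¹ * (r * sᵀ) * A⁻¹ := by
    have h2 : A⁻¹ * (K * A - A * L) * A⁻¹ = A⁻¹ * (r * sᵀ) * A⁻¹ := by rw [h1]
    have h3 : A⁻¹ * (K * A - A * L) * A⁻¹ = A⁻¹ * K - L * A⁻¹ := by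
      simp only [Matrix.mul_sub, Matrix.sub_mul, Matrix.mul_assoc]
      rw [hAA, mul_one, ← Matrix.mul_assoc A⁻¹ A (L * A⁻¹), hAA', one_mul]
    rw [h3] at h2
    exact sub_eq_iff_eq_add'.mp h2
  rw [hS, hS, hS, hS]
  have hzi : K ^ (i + 1 : ℤ) = K * K ^ i := by
    rw [add_comm, Matrix.zpow_add hK 1 i, zpow_one]
  have hzj : L ^ (j + 1 : ℤ) = L ^ j * L := by
    rw [Matrix.zpow_add hL j 1, zpow_one]
  rw [hzi, hzj, zpow_zero, zpow_zero]
  have h4 : sᵀ * L ^ j * A⁻¹ * (K * K ^ i) * r = sᵀ * L ^ j * (A⁻¹ * K) * K ^ i * r := by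
    simp only [Matrix.mul_assoc]
  rw [h4, hkey]
  simp only [Matrix.mul_add, Matrix.add_mul, Matrix.mul_one, Matrix.one_mul,
    Matrix.mul_assoc]
  abel
end

section
/- Let N and 𝒩 be positive integers and n ≥ 1 an integer. Let K and L be N×N complex matrices such that the only N×N complex matrix X with K·X = X·L is X = 0. Let a be an 𝒩×𝒩 complex diagonal matrix. Let r, s : ℂ → (N×𝒩 complex matrices) and M : ℂ → (N×N complex matrices) be functions such that at every t ∈ ℂ: r has derivative Kⁿ·r(t)·a at t, s has derivative −(Lᵀ)ⁿ·s(t)·a at t, M is differentiable at t, and K·M(t) − M(t)·L = r(t)·s(t)ᵀ. Then at every t ∈ ℂ the derivative of M equals Σ_{l=0}^{n−1} K^{n−1−l}·r(t)·a·s(t)ᵀ·L^{l}. -/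
/-!
Differentiating the Sylvester equation shows that `M'(t)` solves `K X - X L = Kⁿ C - C Lⁿ`
with `C = r(t) a s(t)ᵀ`. The sum `∑ₗ K^(n-1-l) C Lˡ` solves the same equation, since
`K (∑ₗ …) - (∑ₗ …) L` telescopes, and `X ↦ K X - X L` is injective.
-/

open Matrix

open Finset in
theorem mul_sum_sub_sum_mul_eq_pow_mul_sub_mul_pow {R : Type*} [Ring R] (a b c : R) (n : ℕ) :
    a * (∑ l ∈ range n, a ^ (n - 1 - l) * c * b ^ l)
      - (∑ l ∈ range n, a ^ (n - 1 - l) * c * b ^ l) * b = a ^ n * c - c * b ^ n := by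
  induction n with
  | zero => simp
  | succ n ih =>
    have hsucc : ∑ l ∈ range (n + 1), a ^ (n + 1 - 1 - l) * c * b ^ l
        = (∑ l ∈ range n, a ^ (n - 1 - l) * c * b ^ l) * b + a ^ n * c := by
      rw [sum_range_succ', sum_mul]
      congr 1
      · refine sum_congr rfl fun l _ => ?_
        rw [show n + 1 - 1 - (l + 1) = n - 1 - l by omega, pow_succ]
        simp only [mul_assoc]
      · simp
    set S := ∑ l ∈ range n, a ^ (n - 1 - l) * c * b ^ l
    rw [hsucc]
    calc a * (S * b + a ^ n * c) - (S * b + a ^ n * c) * b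
        = (a * S - S * b) * b + a ^ (n + 1) * c - a ^ n * c * b := by
          rw [pow_succ']; noncomm_ring
      _ = a ^ (n + 1) * c - c * b ^ (n + 1) := by rw [ih, pow_succ', pow_succ]; noncomm_ring

theorem eq_of_sylvester_eq {R : Type*} [Ring R] {K L X Y : R}
    (huniq : ∀ Z : R, K * Z = Z * L → Z = 0)
    (h : K * X - X * L = K * Y - Y * L) : X = Y := by
  refine sub_eq_zero.mp (huniq _ ?_)
  rwa [mul_sub, sub_mul, sub_eq_sub_iff_sub_eq_sub]

section EntrywiseDeriv

variable {𝕜 : Type*} [NontriviallyNormedField 𝕜] {m n o : Type*}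

def HasEntrywiseDerivAt (A : 𝕜 → Matrix m n 𝕜) (A' : Matrix m n 𝕜) (t : 𝕜) : Prop :=
  ∀ i j, HasDerivAt (fun u => A u i j) (A' i j) t

theorem hasEntrywiseDerivAt_const (C : Matrix m n 𝕜) (t : 𝕜) :
    HasEntrywiseDerivAt (fun _ => C) 0 t :=
  fun _ _ => hasDerivAt_const t _

namespace HasEntrywiseDerivAt

variable {A B : 𝕜 → Matrix m n 𝕜} {A' B' : Matrix m n 𝕜} {t : 𝕜}

theorem unique (hA : HasEntrywiseDerivAt A A' t) (hA₂ : HasEntrywiseDerivAt A B' t) :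
    A' = B' :=
  Matrix.ext fun i j => (hA i j).unique (hA₂ i j)

theorem sub (hA : HasEntrywiseDerivAt A A' t) (hB : HasEntrywiseDerivAt B B' t) :
    HasEntrywiseDerivAt (fun u => A u - B u) (A' - B') t :=
  fun i j => (hA i j).sub (hB i j)

theorem transpose (hA : HasEntrywiseDerivAt A A' t) :
    HasEntrywiseDerivAt (fun u => (A u)ᵀ) A'ᵀ t :=
  fun i j => hA j i

theorem mul [Fintype n] {B : 𝕜 → Matrix n o 𝕜} {B' : Matrix n o 𝕜}
    (hA : HasEntrywiseDerivAt A A' t) (hB : HasEntrywiseDerivAt B B' t) :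
    HasEntrywiseDerivAt (fun u => A u * B u) (A' * B t + A t * B') t := by
  intro i j
  simp only [mul_apply, Matrix.add_apply, ← Finset.sum_add_distrib]
  exact HasDerivAt.fun_sum fun k _ => (hA i k).fun_mul (hB k j)

end HasEntrywiseDerivAt

end EntrywiseDeriv

theorem stmt_1_general (N Nc : ℕ) (n : ℕ)
    (K L : Matrix (Fin N) (Fin N) ℂ)
    (huniq : ∀ X : Matrix (Fin N) (Fin N) ℂ, K * X = X * L → X = 0)
    (d : Fin Nc → ℂ)
    (r s : ℂ → Matrix (Fin N) (Fin Nc) ℂ)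
    (M : ℂ → Matrix (Fin N) (Fin N) ℂ)
    (hr : ∀ (t : ℂ) (p : Fin N) (q : Fin Nc),
      HasDerivAt (fun u => r u p q) ((K ^ n * r t * Matrix.diagonal d) p q) t)
    (hs : ∀ (t : ℂ) (p : Fin N) (q : Fin Nc),
      HasDerivAt (fun u => s u p q) ((-((Lᵀ) ^ n * s t * Matrix.diagonal d)) p q) t)
    (hM : ∀ (t : ℂ) (p q : Fin N), DifferentiableAt ℂ (fun u => M u p q) t)
    (hSyl : ∀ t : ℂ, K * M t - M t * L = r t * (s t)ᵀ) :
    ∀ (t : ℂ) (p q : Fin N), HasDerivAt (fun u => M u p q)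
      ((∑ l ∈ Finset.range n,
        K ^ (n - 1 - l) * r t * Matrix.diagonal d * (s t)ᵀ * L ^ l) p q) t := by
  intro t
  show HasEntrywiseDerivAt M _ t
  set C := r t * diagonal d * (s t)ᵀ
  obtain ⟨D, hMD⟩ : ∃ D, HasEntrywiseDerivAt M D t := ⟨_, fun i j => (hM t i j).hasDerivAt⟩
  have hlhs : HasEntrywiseDerivAt (fun u => K * M u - M u * L) (K * D - D * L) t := by
    simpa using ((hasEntrywiseDerivAt_const K t).mul hMD).sub
      (hMD.mul (hasEntrywiseDerivAt_const L t))
  have hrhs : HasEntrywiseDerivAt (fun u => r u * (s u)ᵀ) (K ^ n * C - C * L ^ n) t := by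
    convert (show HasEntrywiseDerivAt r _ t from hr t).mul
      (show HasEntrywiseDerivAt s _ t from hs t).transpose using 1
    simp only [C, transpose_mul, transpose_pow, diagonal_transpose, transpose_transpose,
      transpose_neg, Matrix.mul_neg, sub_eq_add_neg, Matrix.mul_assoc]
  rw [funext hSyl] at hlhs
  have hderiv := eq_of_sylvester_eq huniq <| (hlhs.unique hrhs).trans
    (mul_sum_sub_sum_mul_eq_pow_mul_sub_mul_pow K L C n).symm
  subst hderiv
  simpa only [C, Matrix.mul_assoc] using hMD

theorem stmt_1 (N Nc : ℕ) (hN : 0 < N) (hNc : 0 < Nc) (n : ℕ) (hn : 1 ≤ n)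
    (K L : Matrix (Fin N) (Fin N) ℂ)
    (huniq : ∀ X : Matrix (Fin N) (Fin N) ℂ, K * X = X * L → X = 0)
    (d : Fin Nc → ℂ)
    (r s : ℂ → Matrix (Fin N) (Fin Nc) ℂ)
    (M : ℂ → Matrix (Fin N) (Fin N) ℂ)
    (hr : ∀ (t : ℂ) (p : Fin N) (q : Fin Nc),
      HasDerivAt (fun u => r u p q) ((K ^ n * r t * Matrix.diagonal d) p q) t)
    (hs : ∀ (t : ℂ) (p : Fin N) (q : Fin Nc),
      HasDerivAt (fun u => s u p q) ((-((Lᵀ) ^ n * s t * Matrix.diagonal d)) p q) t)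
    (hM : ∀ (t : ℂ) (p q : Fin N), DifferentiableAt ℂ (fun u => M u p q) t)
    (hSyl : ∀ t : ℂ, K * M t - M t * L = r t * (s t)ᵀ) :
    ∀ (t : ℂ) (p q : Fin N), HasDerivAt (fun u => M u p q)
      ((∑ l ∈ Finset.range n,
        K ^ (n - 1 - l) * r t * Matrix.diagonal d * (s t)ᵀ * L ^ l) p q) t :=
  stmt_1_general N Nc n K L huniq d r s M hr hs hM hSyl
end

section
/- Let N and 𝒩 be positive integers and n ≥ 1 an integer. Let K and L be invertible N×N complex matrices, a an 𝒩×𝒩 complex diagonal matrix, and C a constant N×N complex matrix. Let r, s : ℂ → (N×𝒩 complex matrices) and M : ℂ → (N×N complex matrices) be functions such that at every t ∈ ℂ: r has derivative Kⁿ·r(t)·a, s has derivative −(Lᵀ)ⁿ·s(t)·a, M has derivative Σ_{l=0}^{n−1} K^{n−1−l}·r(t)·a·s(t)ᵀ·L^{l}, and C + M(t) is invertible. For i, j ∈ ℤ define S^{(i,j)}(t) := s(t)ᵀ·L^j·(C+M(t))⁻¹·K^i·r(t) (negative powers via inverses). Then at every t ∈ ℂ and for all integers i, j, the function S^{(i,j)}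 has derivative S^{(i+n,j)}(t)·a − a·S^{(i,j+n)}(t) − Σ_{l=0}^{n−1} S^{(n−1−l,j)}(t)·a·S^{(i,l)}(t). -/
/-!
Differentiate `sᵀ * L ^ j * (C + M)⁻¹ * K ^ i * r` by the product rule, using
`((C + M)⁻¹)' = -(C + M)⁻¹ * M' * (C + M)⁻¹`. The dispersion relations turn the two outer terms
into `S^{(i+n,j)} a` and `-a S^{(i,j+n)}` (adding exponents of `K` and `L` in `ℤ` needs their
invertibility), and inserting `M' = ∑ₗ K^{n-1-l} r a sᵀ L^l` between the two inverses splits the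
middle term into `∑ₗ S^{(n-1-l,j)} a S^{(i,l)}`.
-/

open Matrix Finset

section Calculus

variable {𝕜 : Type*} [NontriviallyNormedField 𝕜] {l m n : Type*} {t : 𝕜}

theorem hasDerivAt_matrix [Fintype n] {f : 𝕜 → Matrix m n 𝕜} {f' : Matrix m n 𝕜} :
    HasDerivAt f f' t ↔ ∀ i j, HasDerivAt (fun u => f u i j) (f' i j) t := by
  have h : HasDerivAt f f' t ↔ HasDerivAt (fun u => of.symm (f u)) (of.symm f') t := Iff.rfl
  simp_rw [h, hasDerivAt_pi]
  rfl

theorem HasDerivAt.matrix_transpose [Fintype m] [Fintype n] {f : 𝕜 → Matrix m n 𝕜}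
    {f' : Matrix m n 𝕜} (hf : HasDerivAt f f' t) : HasDerivAt (fun u => (f u)ᵀ) f'ᵀ t := by
  rw [hasDerivAt_matrix] at hf ⊢
  exact fun i j => hf j i

theorem HasDerivAt.matrix_mul [Fintype l] [Fintype m] [Fintype n] {f : 𝕜 → Matrix l m 𝕜}
    {g : 𝕜 → Matrix m n 𝕜} {f' : Matrix l m 𝕜} {g' : Matrix m n 𝕜}
    (hf : HasDerivAt f f' t) (hg : HasDerivAt g g' t) :
    HasDerivAt (fun u => f u * g u) (f' * g t + f t * g') t := by
  rw [hasDerivAt_matrix] at hf hg ⊢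
  intro i k
  simp only [mul_apply]
  exact (HasDerivAt.fun_sum fun j _ => (hf i j).mul (hg j k)).congr_deriv
    (by simp only [Matrix.add_apply, mul_apply, Finset.sum_add_distrib])

theorem HasDerivAt.matrix_mul_const [Fintype l] [Fintype m] [Fintype n]
    {f : 𝕜 → Matrix l m 𝕜} {f' : Matrix l m 𝕜} (hf : HasDerivAt f f' t) (B : Matrix m n 𝕜) :
    HasDerivAt (fun u => f u * B) (f' * B) t := by
  have hB : HasDerivAt (fun _ => B) (0 : Matrix m n 𝕜) t :=
    hasDerivAt_matrix.2 fun i j => hasDerivAt_const t (B i j)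
  simpa using hf.matrix_mul hB

theorem HasDerivAt.matrix_inv [CompleteSpace 𝕜] [Fintype n] [DecidableEq n]
    {f : 𝕜 → Matrix n n 𝕜} {f' : Matrix n n 𝕜} (hf : HasDerivAt f f' t)
    (h : IsUnit (f t).det) :
    HasDerivAt (fun u => (f u)⁻¹) (-((f t)⁻¹ * f' * (f t)⁻¹)) t := by
  -- `HasDerivAt` only sees the topology, and the operator norm induces the product topology
  -- while making matrices a complete normed algebra, where `Ring.inverse` is differentiable.
  let _ := Matrix.linftyOpNormedRing (n := n) (α := 𝕜)
  let _ := Matrix.linftyOpNormedAlgebra (n := n) (α := 𝕜) (R := 𝕜)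
  have : HasSummableGeomSeries (Matrix n n 𝕜) :=
    @instHasSummableGeomSeriesOfCompleteSpace _ _ (FiniteDimensional.complete 𝕜 _)
  obtain ⟨x, hx⟩ := (isUnit_iff_isUnit_det _).2 h
  have hx' : ((x⁻¹ : (Matrix n n 𝕜)ˣ) : Matrix n n 𝕜) = (f t)⁻¹ := by rw [coe_units_inv, hx]
  have hinv := (hasFDerivAt_ringInverse (𝕜 := 𝕜) x).comp_hasDerivAt_of_eq t hf hx
  simp_rw [Function.comp_def, ← nonsing_inv_eq_ringInverse] at hinv
  rwa [_root_.neg_apply, ContinuousLinearMap.mulLeftRight_apply, hx'] at hinv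

end Calculus

section MasterFunction

variable {R : Type*} [CommRing R] {N Nc : Type*} [Fintype N] [DecidableEq N]

noncomputable def masterFunction (K L W : Matrix N N R) (r s : Matrix N Nc R) (i j : ℤ) :
    Matrix Nc Nc R :=
  sᵀ * L ^ j * W * K ^ i * r

variable [Fintype Nc] [DecidableEq Nc] (K L W : Matrix N N R) (r s : Matrix N Nc R) (d : Nc → R)
  (n : ℕ) (i j : ℤ)

theorem masterFunction_deriv_identity (hK : IsUnit K.det) (hL : IsUnit L.det) :
    ((-(Lᵀ ^ n * s * diagonal d))ᵀ * L ^ j * W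
        + sᵀ * L ^ j * -(W * (∑ l ∈ range n, K ^ (n - 1 - l) * r * diagonal d * sᵀ * L ^ l) * W))
        * K ^ i * r
      + sᵀ * L ^ j * W * K ^ i * (K ^ n * r * diagonal d)
      = masterFunction K L W r s (i + n) j * diagonal d
        - diagonal d * masterFunction K L W r s i (j + n)
        - ∑ l ∈ range n, masterFunction K L W r s (n - 1 - l) j * diagonal d
            * masterFunction K L W r s i l := by
  have hT : (-(Lᵀ ^ n * s * diagonal d))ᵀ = -(diagonal d * sᵀ * L ^ n) := by
    rw [transpose_neg, transpose_mul, transpose_mul, transpose_pow, transpose_transpose,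
      diagonal_transpose, Matrix.mul_assoc]
  have hsum : ∑ l ∈ range n, masterFunction K L W r s (n - 1 - l) j * diagonal d
        * masterFunction K L W r s i l
      = sᵀ * L ^ j * (W * (∑ l ∈ range n, K ^ (n - 1 - l) * r * diagonal d * sᵀ * L ^ l) * W)
        * K ^ i * r := by
    simp only [masterFunction, Matrix.mul_sum, Matrix.sum_mul]
    refine sum_congr rfl fun l hl => ?_
    rw [show (n : ℤ) - 1 - l = ((n - 1 - l : ℕ) : ℤ) by have := mem_range.1 hl; omega,
      zpow_natCast, zpow_natCast]
    simp only [Matrix.mul_assoc]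
  rw [hT, hsum, masterFunction, masterFunction, zpow_add hK, add_comm j, zpow_add hL,
    zpow_natCast, zpow_natCast]
  simp only [Matrix.mul_assoc, Matrix.add_mul, Matrix.neg_mul, Matrix.mul_neg,
    sub_eq_add_neg]
  abel

end MasterFunction

theorem stmt_2_general (N Nc : ℕ) (n : ℕ)
    (K L : Matrix (Fin N) (Fin N) ℂ) (hK : IsUnit K.det) (hL : IsUnit L.det)
    (d : Fin Nc → ℂ) (C : Matrix (Fin N) (Fin N) ℂ)
    (r s : ℂ → Matrix (Fin N) (Fin Nc) ℂ)
    (M : ℂ → Matrix (Fin N) (Fin N) ℂ)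
    (hr : ∀ (t : ℂ) (p : Fin N) (q : Fin Nc),
      HasDerivAt (fun u => r u p q) ((K ^ n * r t * Matrix.diagonal d) p q) t)
    (hs : ∀ (t : ℂ) (p : Fin N) (q : Fin Nc),
      HasDerivAt (fun u => s u p q) ((-((Lᵀ) ^ n * s t * Matrix.diagonal d)) p q) t)
    (hM : ∀ (t : ℂ) (p q : Fin N), HasDerivAt (fun u => M u p q)
      ((∑ l ∈ Finset.range n,
        K ^ (n - 1 - l) * r t * Matrix.diagonal d * (s t)ᵀ * L ^ l) p q) t)
    (hCM : ∀ t : ℂ, IsUnit (C + M t).det)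
    (S : ℤ → ℤ → ℂ → Matrix (Fin Nc) (Fin Nc) ℂ)
    (hS : ∀ (i j : ℤ) (t : ℂ), S i j t = (s t)ᵀ * (L ^ j) * (C + M t)⁻¹ * (K ^ i) * r t) :
    ∀ (t : ℂ) (i j : ℤ) (p q : Fin Nc), HasDerivAt (fun u => S i j u p q)
      ((S (i + (n : ℤ)) j t * Matrix.diagonal d - Matrix.diagonal d * S i (j + (n : ℤ)) t
        - ∑ l ∈ Finset.range n,
            S ((n : ℤ) - 1 - (l : ℤ)) j t * Matrix.diagonal d * S i (l : ℤ) t) p q) t := by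
  intro t i j p q
  have hr' : HasDerivAt r (K ^ n * r t * diagonal d) t := hasDerivAt_matrix.2 (hr t)
  have hsT := (hasDerivAt_matrix.2 (hs t)).matrix_transpose
  have hW := ((hasDerivAt_matrix (f := fun u => C + M u)).2
    fun p q => (hM t p q).const_add (C p q)).matrix_inv (hCM t)
  have hSij :=
    (((hsT.matrix_mul_const (L ^ j)).matrix_mul hW).matrix_mul_const (K ^ i)).matrix_mul hr'
  have hSt : ∀ i j, S i j t = masterFunction K L (C + M t)⁻¹ (r t) (s t) i j := (hS · · t)
  rw [← funext (hS i j), masterFunction_deriv_identity K L _ (r t) (s t) d n i j hK hL] at hSij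
  simp only [hSt]
  exact hasDerivAt_matrix.1 hSij p q

theorem stmt_2 (N Nc : ℕ) (hN : 0 < N) (hNc : 0 < Nc) (n : ℕ) (hn : 1 ≤ n)
    (K L : Matrix (Fin N) (Fin N) ℂ) (hK : IsUnit K.det) (hL : IsUnit L.det)
    (d : Fin Nc → ℂ) (C : Matrix (Fin N) (Fin N) ℂ)
    (r s : ℂ → Matrix (Fin N) (Fin Nc) ℂ)
    (M : ℂ → Matrix (Fin N) (Fin N) ℂ)
    (hr : ∀ (t : ℂ) (p : Fin N) (q : Fin Nc),
      HasDerivAt (fun u => r u p q) ((K ^ n * r t * Matrix.diagonal d) p q) t)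
    (hs : ∀ (t : ℂ) (p : Fin N) (q : Fin Nc),
      HasDerivAt (fun u => s u p q) ((-((Lᵀ) ^ n * s t * Matrix.diagonal d)) p q) t)
    (hM : ∀ (t : ℂ) (p q : Fin N), HasDerivAt (fun u => M u p q)
      ((∑ l ∈ Finset.range n,
        K ^ (n - 1 - l) * r t * Matrix.diagonal d * (s t)ᵀ * L ^ l) p q) t)
    (hCM : ∀ t : ℂ, IsUnit (C + M t).det)
    (S : ℤ → ℤ → ℂ → Matrix (Fin Nc) (Fin Nc) ℂ)
    (hS : ∀ (i j : ℤ) (t : ℂ), S i j t = (s t)ᵀ * (L ^ j) * (C + M t)⁻¹ * (K ^ i) * r t) :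
    ∀ (t : ℂ) (i j : ℤ) (p q : Fin Nc), HasDerivAt (fun u => S i j u p q)
      ((S (i + (n : ℤ)) j t * Matrix.diagonal d - Matrix.diagonal d * S i (j + (n : ℤ)) t
        - ∑ l ∈ Finset.range n,
            S ((n : ℤ) - 1 - (l : ℤ)) j t * Matrix.diagonal d * S i (l : ℤ) t) p q) t :=
  stmt_2_general N Nc n K L hK hL d C r s M hr hs hM hCM S hS
end

section
/- Let N and 𝒩 be positive integers. Let K, L, C, M be N×N complex matrices and r, s be N×𝒩 complex matrices such that K is invertible, C + M is invertible, K·M − M·L = r·sᵀ, and K·C = C·L. Then det(I_𝒩 − sᵀ·(C+M)⁻¹·K⁻¹·r) = det L / det K. In particular, if K = L then this determinant equals 1. -/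
/-!
Adding the two relations gives `K (C + M) - r sᵀ = (C + M) L`, so
`1 - (C + M)⁻¹ K⁻¹ r sᵀ = (K (C + M))⁻¹ (C + M) L`, whose determinant is `det L / det K`.
The Weinstein–Aronszajn identity `det (1 - X Y) = det (1 - Y X)` moves this to the
`𝒩 × 𝒩` determinant of the theorem.
-/

open Matrix

variable {n m R : Type*} [Fintype n] [Fintype m]

theorem Matrix.mul_add_sub_eq_add_mul_of_sylvester [Ring R] {K L C M : Matrix n n R}
    {r s : Matrix n m R} (hSyl : K * M - M * L = r * sᵀ) (hKC : K * C = C * L) :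
    K * (C + M) - r * sᵀ = (C + M) * L := by
  rw [← hSyl, Matrix.mul_add, Matrix.add_mul, hKC]
  abel

theorem Matrix.det_one_sub_mul_inv_mul_inv_mul_of_mul_sub_eq [DecidableEq n] [DecidableEq m]
    [Field R] {A K L : Matrix n n R} {r : Matrix n m R} {t : Matrix m n R}
    (hK : IsUnit K.det) (hA : IsUnit A.det) (h : K * A - r * t = A * L) :
    (1 - t * A⁻¹ * K⁻¹ * r).det = L.det / K.det := by
  have hKA : IsUnit (K * A).det := by rw [det_mul]; exact hK.mul hA
  have hfactor : 1 - A⁻¹ * K⁻¹ * r * t = (K * A)⁻¹ * (A * L) := by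
    rw [← h, Matrix.mul_sub, nonsing_inv_mul _ hKA, mul_inv_rev, Matrix.mul_assoc _ r t]
  calc (1 - t * A⁻¹ * K⁻¹ * r).det = (1 - A⁻¹ * K⁻¹ * r * t).det := by
        rw [Matrix.mul_assoc, Matrix.mul_assoc, det_one_sub_mul_comm, ← Matrix.mul_assoc]
    _ = ((K * A)⁻¹ * (A * L)).det := by rw [hfactor]
    _ = L.det / K.det := by
        rw [det_mul, det_nonsing_inv, Ring.inverse_eq_inv', det_mul, det_mul]
        field_simp [hK.ne_zero, hA.ne_zero]

theorem stmt_3_general (N Nc : ℕ)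
    (K L C M : Matrix (Fin N) (Fin N) ℂ)
    (r s : Matrix (Fin N) (Fin Nc) ℂ)
    (hK : IsUnit K.det) (hCM : IsUnit (C + M).det)
    (hSyl : K * M - M * L = r * sᵀ)
    (hKC : K * C = C * L) :
    ((1 : Matrix (Fin Nc) (Fin Nc) ℂ) - sᵀ * (C + M)⁻¹ * K⁻¹ * r).det = L.det / K.det
    ∧ (K = L →
        ((1 : Matrix (Fin Nc) (Fin Nc) ℂ) - sᵀ * (C + M)⁻¹ * K⁻¹ * r).det = 1) := by
  have hdet := det_one_sub_mul_inv_mul_inv_mul_of_mul_sub_eq hK hCM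
    (mul_add_sub_eq_add_mul_of_sylvester hSyl hKC)
  refine ⟨hdet, fun hKL => ?_⟩
  rw [hdet, hKL, div_self (hKL ▸ hK.ne_zero)]

theorem stmt_3 (N Nc : ℕ) (hN : 0 < N) (hNc : 0 < Nc)
    (K L C M : Matrix (Fin N) (Fin N) ℂ)
    (r s : Matrix (Fin N) (Fin Nc) ℂ)
    (hK : IsUnit K.det) (hCM : IsUnit (C + M).det)
    (hSyl : K * M - M * L = r * sᵀ)
    (hKC : K * C = C * L) :
    ((1 : Matrix (Fin Nc) (Fin Nc) ℂ) - sᵀ * (C + M)⁻¹ * K⁻¹ * r).det = L.det / K.det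
    ∧ (K = L →
        ((1 : Matrix (Fin Nc) (Fin Nc) ℂ) - sᵀ * (C + M)⁻¹ * K⁻¹ * r).det = 1) :=
  stmt_3_general N Nc K L C M r s hK hCM hSyl hKC
end

section
/- Let 𝒩 be a positive integer, n ≥ 1 an integer, and a a fixed 𝒩×𝒩 complex diagonal matrix. For every pair of integers (i,j) let S_{i,j} : ℂ × ℂ → (𝒩×𝒩 complex matrices) be a function of two complex variables (x, y) (playing the roles of x_n and x_{n+1}) such that at every point and for all integers i, j: (a) the partial derivative of S_{i,j} with respect to x exists and equals S_{i+n,j}·a − a·S_{i,j+n} − Σ_{l=0}^{n−1} S_{n−1−l,j}·a·S_{i,l}; (b) the partial derivative of S_{i,j} with respect to y exists and equals S_{i+n+1,j}·a − a·S_{i,j+n+1} − Σ_{l=0}^{n} S_{n−l,j}·a·S_{i,l}; (c) S_{i+1,j} − S_{i,j+1} = S_{0,j}·S_{i,0}. Define U := S_{0,0} and V := I_𝒩 − S_{−1,0}, and assume V is invertible at every point. Then at every point (∂_y V)·V⁻¹ = −∂_x U. -/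
/-!
Relation (c) at `i = -1` reads `S_{-1,j+1} = S_{0,j} V`. Substituting it into the
`x_{n+1}`-flow of `S_{-1,0}`, and merging the `l = 0` term of its sum with `S_{n,0} a`, factors
that flow as `(∂ₓ U) V`. Since `∂_y V = -∂_y S_{-1,0}`, multiplying by `V⁻¹` gives the claim.
-/

open Matrix

section Flows

variable {R : Type*} [Ring R]

/-- Right-hand side of the `x_n`-flow of the master functions. -/
def flowX (T : ℤ → ℤ → R) (a : R) (n : ℕ) (i j : ℤ) : R :=
  T (i + (n : ℤ)) j * a - a * T i (j + (n : ℤ))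
    - ∑ l ∈ Finset.range n, T ((n : ℤ) - 1 - (l : ℤ)) j * a * T i (l : ℤ)

/-- Right-hand side of the `x_{n+1}`-flow of the master functions. -/
def flowY (T : ℤ → ℤ → R) (a : R) (n : ℕ) (i j : ℤ) : R :=
  T (i + (n : ℤ) + 1) j * a - a * T i (j + (n : ℤ) + 1)
    - ∑ l ∈ Finset.range (n + 1), T ((n : ℤ) - (l : ℤ)) j * a * T i (l : ℤ)

variable {T : ℤ → ℤ → R}

theorem neg_one_succ_eq_mul_one_sub
    (hc : ∀ i j : ℤ, T (i + 1) j - T i (j + 1) = T 0 j * T i 0) (j : ℤ) :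
    T (-1) (j + 1) = T 0 j * (1 - T (-1) 0) := by
  have h := hc (-1) j
  rw [neg_add_cancel] at h
  rw [mul_sub, mul_one, ← h]
  abel

theorem flowY_neg_one_zero
    (hc : ∀ i j : ℤ, T (i + 1) j - T i (j + 1) = T 0 j * T i 0) (a : R) (n : ℕ) :
    flowY T a n (-1) 0 = flowX T a n 0 0 * (1 - T (-1) 0) := by
  have hsum : ∑ l ∈ Finset.range (n + 1), T ((n : ℤ) - (l : ℤ)) 0 * a * T (-1) (l : ℤ)
      = (∑ l ∈ Finset.range n, T ((n : ℤ) - 1 - (l : ℤ)) 0 * a * T 0 (l : ℤ))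
          * (1 - T (-1) 0) + T n 0 * a * T (-1) 0 := by
    rw [Finset.sum_range_succ', Finset.sum_mul]
    congr 1
    refine Finset.sum_congr rfl fun l _ => ?_
    rw [Nat.cast_succ, ← sub_sub, sub_right_comm, neg_one_succ_eq_mul_one_sub hc, ← mul_assoc]
  rw [flowY, flowX, hsum, neg_add_cancel_comm, zero_add,
    neg_one_succ_eq_mul_one_sub hc]
  noncomm_ring

end Flows

theorem matrix_of_deriv_eq {m n : Type*} {f : ℂ → Matrix m n ℂ} {M : Matrix m n ℂ} {t : ℂ}
    (h : ∀ p q, HasDerivAt (fun s => f s p q) (M p q) t) :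
    Matrix.of (fun p q => deriv (fun s => f s p q) t) = M := by
  ext p q
  exact (h p q).deriv

theorem stmt_4_general (Nc : ℕ) (n : ℕ) (d : Fin Nc → ℂ)
    (S : ℤ → ℤ → ℂ → ℂ → Matrix (Fin Nc) (Fin Nc) ℂ)
    (ha : ∀ (i j : ℤ) (x y : ℂ) (p q : Fin Nc), HasDerivAt (fun x' => S i j x' y p q)
      ((S (i + (n : ℤ)) j x y * Matrix.diagonal d - Matrix.diagonal d * S i (j + (n : ℤ)) x y
        - ∑ l ∈ Finset.range n,
            S ((n : ℤ) - 1 - (l : ℤ)) j x y * Matrix.diagonal d * S i (l : ℤ) x y) p q) x)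
    (hb : ∀ (i j : ℤ) (x y : ℂ) (p q : Fin Nc), HasDerivAt (fun y' => S i j x y' p q)
      ((S (i + (n : ℤ) + 1) j x y * Matrix.diagonal d
        - Matrix.diagonal d * S i (j + (n : ℤ) + 1) x y
        - ∑ l ∈ Finset.range (n + 1),
            S ((n : ℤ) - (l : ℤ)) j x y * Matrix.diagonal d * S i (l : ℤ) x y) p q) y)
    (hc : ∀ (i j : ℤ) (x y : ℂ), S (i + 1) j x y - S i (j + 1) x y = S 0 j x y * S i 0 x y)
    (hV : ∀ x y : ℂ, IsUnit ((1 : Matrix (Fin Nc) (Fin Nc) ℂ) - S (-1) 0 x y).det) :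
    ∀ x y : ℂ,
      (Matrix.of fun p q =>
          deriv (fun y' => ((1 : Matrix (Fin Nc) (Fin Nc) ℂ) - S (-1) 0 x y') p q) y)
        * ((1 : Matrix (Fin Nc) (Fin Nc) ℂ) - S (-1) 0 x y)⁻¹
      = - Matrix.of fun p q => deriv (fun x' => S 0 0 x' y p q) x := by
  intro x y
  have hU := matrix_of_deriv_eq (f := fun x' => S 0 0 x' y)
    (M := flowX (S · · x y) (diagonal d) n 0 0) (ha 0 0 x y)
  have hVy := matrix_of_deriv_eq (f := fun y' => 1 - S (-1) 0 x y')
    (M := -flowY (S · · x y) (diagonal d) n (-1) 0) fun p q => (hb (-1) 0 x y p q).const_sub _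
  rw [hU, hVy, flowY_neg_one_zero (hc · · x y), neg_mul,
    Matrix.mul_nonsing_inv_cancel_right _ _ (hV x y)]

theorem stmt_4 (Nc : ℕ) (hNc : 0 < Nc) (n : ℕ) (hn : 1 ≤ n) (d : Fin Nc → ℂ)
    (S : ℤ → ℤ → ℂ → ℂ → Matrix (Fin Nc) (Fin Nc) ℂ)
    (ha : ∀ (i j : ℤ) (x y : ℂ) (p q : Fin Nc), HasDerivAt (fun x' => S i j x' y p q)
      ((S (i + (n : ℤ)) j x y * Matrix.diagonal d - Matrix.diagonal d * S i (j + (n : ℤ)) x y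
        - ∑ l ∈ Finset.range n,
            S ((n : ℤ) - 1 - (l : ℤ)) j x y * Matrix.diagonal d * S i (l : ℤ) x y) p q) x)
    (hb : ∀ (i j : ℤ) (x y : ℂ) (p q : Fin Nc), HasDerivAt (fun y' => S i j x y' p q)
      ((S (i + (n : ℤ) + 1) j x y * Matrix.diagonal d
        - Matrix.diagonal d * S i (j + (n : ℤ) + 1) x y
        - ∑ l ∈ Finset.range (n + 1),
            S ((n : ℤ) - (l : ℤ)) j x y * Matrix.diagonal d * S i (l : ℤ) x y) p q) y)
    (hc : ∀ (i j : ℤ) (x y : ℂ), S (i + 1) j x y - S i (j + 1) x y = S 0 j x y * S i 0 x y)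
    (hV : ∀ x y : ℂ, IsUnit ((1 : Matrix (Fin Nc) (Fin Nc) ℂ) - S (-1) 0 x y).det) :
    ∀ x y : ℂ,
      (Matrix.of fun p q =>
          deriv (fun y' => ((1 : Matrix (Fin Nc) (Fin Nc) ℂ) - S (-1) 0 x y') p q) y)
        * ((1 : Matrix (Fin Nc) (Fin Nc) ℂ) - S (-1) 0 x y)⁻¹
      = - Matrix.of fun p q => deriv (fun x' => S 0 0 x' y p q) x :=
  stmt_4_general Nc n d S ha hb hc hV
end

section
/- Let N and 𝒩 be positive integers. Let K be an N×N complex matrix such that the only N×N complex matrix X with K·X·K† + X = 0 is X = 0, where K† denotes the conjugate transpose. Let r be an N×𝒩 complex matrix and let M be an N×N complex matrix with K·M·K† + M = r·r†. Then M is Hermitian, i.e. M† = M. -/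
open Matrix

theorem stmt_6 (N Nc : ℕ) (hN : 0 < N) (hNc : 0 < Nc)
    (K : Matrix (Fin N) (Fin N) ℂ)
    (huniq : ∀ X : Matrix (Fin N) (Fin N) ℂ, K * X * Kᴴ + X = 0 → X = 0)
    (r : Matrix (Fin N) (Fin Nc) ℂ) (M : Matrix (Fin N) (Fin N) ℂ)
    (hM : K * M * Kᴴ + M = r * rᴴ) :
    Mᴴ = M := by
  have hM2 : K * Mᴴ * Kᴴ + Mᴴ = r * rᴴ := by
    have := congrArg conjTranspose hM
    simpa [conjTranspose_add, conjTranspose_mul, Matrix.mul_assoc] using this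
  have h := huniq (Mᴴ - M) (by
    have : K * (Mᴴ - M) * Kᴴ + (Mᴴ - M)
        = (K * Mᴴ * Kᴴ + Mᴴ) - (K * M * Kᴴ + M) := by
      noncomm_ring
    rw [this, hM, hM2, sub_self])
  exact sub_eq_zero.mp h
end

section
/- Let N and 𝒩 be positive integers. Let K be an invertible N×N complex matrix, M an invertible N×N complex matrix, and r an N×𝒩 complex matrix such that K·M·K† + M = r·r†, where K† denotes the conjugate transpose. Then det(I_𝒩 − r†·(K†)⁻¹·M⁻¹·K⁻¹·r) = (−1)^N / (det K · conj(det K)), i.e. the determinant equals (−1)^N divided by |det K|². -/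
/-!
By Sylvester's determinant identity, `det (1 - s X r) = det (1 - X r s)` with
`X = L⁻¹ M⁻¹ K⁻¹`. Substituting `r s = K M L + M` gives `X r s = 1 + X M`, so the
determinant is that of `-(X M)`, namely `(-1)^N / (det K det L)`. For `L = Kᴴ`, `s = rᴴ`
this is `(-1)^N / |det K|²`.
-/

open Matrix

variable {n m R : Type*} [Fintype n] [DecidableEq n] [Fintype m] [DecidableEq m]

theorem Matrix.inv_mul_inv_mul_inv_mul_eq_one_add [CommRing R] {K M L S : Matrix n n R}
    (hK : IsUnit K.det) (hM : IsUnit M.det) (hL : IsUnit L.det) (h : K * M * L + M = S) :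
    L⁻¹ * M⁻¹ * K⁻¹ * S = 1 + L⁻¹ * M⁻¹ * K⁻¹ * M := by
  rw [← h, Matrix.mul_add, add_left_inj]
  calc L⁻¹ * M⁻¹ * K⁻¹ * (K * M * L) = L⁻¹ * (M⁻¹ * (K⁻¹ * K) * M) * L := by
        simp only [Matrix.mul_assoc]
    _ = 1 := by
        rw [nonsing_inv_mul K hK, Matrix.mul_one, nonsing_inv_mul M hM, Matrix.mul_one,
          nonsing_inv_mul L hL]

theorem Matrix.det_one_sub_mul_inv_mul_inv_mul_inv_mul [Field R] {K M L : Matrix n n R}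
    (r : Matrix n m R) (s : Matrix m n R)
    (hK : IsUnit K.det) (hM : IsUnit M.det) (hL : IsUnit L.det) (h : K * M * L + M = r * s) :
    (1 - s * L⁻¹ * M⁻¹ * K⁻¹ * r).det = (-1) ^ Fintype.card n / (K.det * L.det) := by
  set X := L⁻¹ * M⁻¹ * K⁻¹
  have hXrs : X * r * s = 1 + X * M := by
    rw [Matrix.mul_assoc, inv_mul_inv_mul_inv_mul_eq_one_add hK hM hL h]
  calc (1 - s * L⁻¹ * M⁻¹ * K⁻¹ * r).det = (1 - s * (X * r)).det := by
        simp only [X, Matrix.mul_assoc]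
    _ = (1 - X * r * s).det := by rw [det_one_sub_mul_comm]
    _ = (-1) ^ Fintype.card n * (X.det * M.det) := by
        rw [hXrs, sub_add_cancel_left, det_neg, det_mul]
    _ = (-1) ^ Fintype.card n / (K.det * L.det) := by
        simp only [X, det_mul, det_nonsing_inv, Ring.inverse_eq_inv']
        field_simp [hM.ne_zero]

theorem stmt_8_general (N Nc : ℕ)
    (K M : Matrix (Fin N) (Fin N) ℂ)
    (hK : IsUnit K.det) (hM : IsUnit M.det)
    (r : Matrix (Fin N) (Fin Nc) ℂ)
    (hSyl : K * M * Kᴴ + M = r * rᴴ) :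
    ((1 : Matrix (Fin Nc) (Fin Nc) ℂ) - rᴴ * (Kᴴ)⁻¹ * M⁻¹ * K⁻¹ * r).det
      = (-1) ^ N / (K.det * (starRingEnd ℂ) K.det) := by
  have hKH : IsUnit (Kᴴ).det := by
    rw [det_conjTranspose]
    exact hK.star
  rw [det_one_sub_mul_inv_mul_inv_mul_inv_mul r rᴴ hK hM hKH hSyl, Fintype.card_fin,
    det_conjTranspose]
  rfl

theorem stmt_8 (N Nc : ℕ) (hN : 0 < N) (hNc : 0 < Nc)
    (K M : Matrix (Fin N) (Fin N) ℂ)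
    (hK : IsUnit K.det) (hM : IsUnit M.det)
    (r : Matrix (Fin N) (Fin Nc) ℂ)
    (hSyl : K * M * Kᴴ + M = r * rᴴ) :
    ((1 : Matrix (Fin Nc) (Fin Nc) ℂ) - rᴴ * (Kᴴ)⁻¹ * M⁻¹ * K⁻¹ * r).det
      = (-1) ^ N / (K.det * (starRingEnd ℂ) K.det) :=
  stmt_8_general N Nc K M hK hM r hSyl
end

section
/- Let N be a positive integer. Let K and C be invertible N×N complex matrices, M an N×N complex matrix, and r, s column vectors in ℂ^N such that K·M·(conj K) + M = −r·s† (entrywise conjugate conj K, and s† the conjugate-transpose row vector). Assume C − M·(conj C)⁻¹·(conj M) is invertible. Then the scalar 1 − s†·(conj K)⁻¹·(conj C)⁻¹·(conj M)·(C − M·(conj C)⁻¹·(conj M))⁻¹·K⁻¹·r equals det(C + K⁻¹·M·(conj K)⁻¹·(conj C)⁻¹·(conj M)) / det(C − M·(conj C)⁻¹·(conj M)). -/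
open Matrix

/-!
The rank-one right-hand side of the Sylvester equation turns the scalar into a determinant,
`1 - u ⬝ᵥ (B *ᵥ r) = det (1 + B (K M K' + M))` (matrix determinant lemma). Moving the factor
`K'⁻¹ X M'` of `B` to the other side with `det (1 + P Q) = det (1 + Q P)` exposes
`K⁻¹ (K M K' + M) K'⁻¹ = M + K⁻¹ M K'⁻¹`, and with `A = C - M X M'` the resulting matrix is
`1 + A⁻¹ (M + K⁻¹ M K'⁻¹) X M' = A⁻¹ (C + K⁻¹ M K'⁻¹ X M')`. Complex conjugation plays no role:
the theorem is the case `K' = conj K`, `X = (conj C)⁻¹`, `M' = conj M`.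
-/

namespace Matrix

variable {n R : Type*} [Fintype n] [DecidableEq n] [CommRing R]

theorem det_one_sub_mul_vecMulVec (B : Matrix n n R) (r u : n → R) :
    det (1 - B * vecMulVec r u) = 1 - u ⬝ᵥ (B *ᵥ r) := by
  rw [mul_vecMulVec, sub_eq_add_neg, ← neg_vecMulVec, vecMulVec_eq Unit,
    det_one_add_replicateCol_mul_replicateRow, dotProduct_neg, ← sub_eq_add_neg]

theorem inv_mul_sylvester_mul_inv {K K' : Matrix n n R} (hK : IsUnit K.det)
    (hK' : IsUnit K'.det) (M : Matrix n n R) :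
    K⁻¹ * (K * M * K' + M) * K'⁻¹ = M + K⁻¹ * M * K'⁻¹ := by
  rw [Matrix.mul_add, Matrix.add_mul, ← Matrix.mul_assoc, ← Matrix.mul_assoc,
    nonsing_inv_mul _ hK, Matrix.one_mul, Matrix.mul_assoc M, mul_nonsing_inv _ hK',
    Matrix.mul_one]

theorem one_sub_dotProduct_mulVec_eq_det_div_det {𝕜 : Type*} [Field 𝕜]
    (K K' C X M M' : Matrix n n 𝕜) (r u : n → 𝕜) (hK : IsUnit K.det) (hK' : IsUnit K'.det)
    (hSyl : K * M * K' + M = -vecMulVec r u) (hA : IsUnit (C - M * X * M').det) :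
    1 - u ⬝ᵥ ((K'⁻¹ * X * M' * (C - M * X * M')⁻¹ * K⁻¹) *ᵥ r)
      = (C + K⁻¹ * M * K'⁻¹ * X * M').det / (C - M * X * M').det := by
  set A := C - M * X * M'
  calc 1 - u ⬝ᵥ ((K'⁻¹ * X * M' * A⁻¹ * K⁻¹) *ᵥ r)
      = det (1 + K'⁻¹ * X * M' * A⁻¹ * K⁻¹ * (K * M * K' + M)) := by
        rw [hSyl, Matrix.mul_neg, ← sub_eq_add_neg, det_one_sub_mul_vecMulVec]
    _ = det (1 + A⁻¹ * (K⁻¹ * (K * M * K' + M) * K'⁻¹) * (X * M')) := by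
        rw [show K'⁻¹ * X * M' * A⁻¹ * K⁻¹ * (K * M * K' + M)
            = (K'⁻¹ * X * M') * (A⁻¹ * K⁻¹ * (K * M * K' + M)) by simp only [Matrix.mul_assoc],
          det_one_add_mul_comm]
        simp only [Matrix.mul_assoc]
    _ = det (A⁻¹ * (A + (M + K⁻¹ * M * K'⁻¹) * (X * M'))) := by
        rw [inv_mul_sylvester_mul_inv hK hK', Matrix.mul_add A⁻¹ A, nonsing_inv_mul _ hA,
          Matrix.mul_assoc]
    _ = (C + K⁻¹ * M * K'⁻¹ * X * M').det / A.det := by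
        rw [det_mul, det_nonsing_inv, Ring.inverse_eq_inv', inv_mul_eq_div]
        congr 2
        simp only [A, Matrix.add_mul, Matrix.mul_assoc]
        abel

end Matrix

theorem stmt_16_general (N : ℕ)
    (K C M : Matrix (Fin N) (Fin N) ℂ)
    (hK : IsUnit K.det)
    (r s : Fin N → ℂ)
    (hSyl : K * M * (K.map (starRingEnd ℂ)) + M = -Matrix.vecMulVec r (star s))
    (hInv : IsUnit (C - M * (C.map (starRingEnd ℂ))⁻¹ * (M.map (starRingEnd ℂ))).det) :
    1 - dotProduct (star s)
        (Matrix.mulVec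
          ((K.map (starRingEnd ℂ))⁻¹ * (C.map (starRingEnd ℂ))⁻¹ * (M.map (starRingEnd ℂ))
            * (C - M * (C.map (starRingEnd ℂ))⁻¹ * (M.map (starRingEnd ℂ)))⁻¹ * K⁻¹)
          r)
      = (C + K⁻¹ * M * (K.map (starRingEnd ℂ))⁻¹ * (C.map (starRingEnd ℂ))⁻¹
            * (M.map (starRingEnd ℂ))).det
        / (C - M * (C.map (starRingEnd ℂ))⁻¹ * (M.map (starRingEnd ℂ))).det := by
  have hKbar : IsUnit (K.map (starRingEnd ℂ)).det := by
    rw [← RingHom.mapMatrix_apply, ← RingHom.map_det]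
    exact hK.map _
  exact one_sub_dotProduct_mulVec_eq_det_div_det _ _ _ _ _ _ r _ hK hKbar hSyl hInv

theorem stmt_16 (N : ℕ) (hN : 0 < N)
    (K C M : Matrix (Fin N) (Fin N) ℂ)
    (hK : IsUnit K.det) (hC : IsUnit C.det)
    (r s : Fin N → ℂ)
    (hSyl : K * M * (K.map (starRingEnd ℂ)) + M = -Matrix.vecMulVec r (star s))
    (hInv : IsUnit (C - M * (C.map (starRingEnd ℂ))⁻¹ * (M.map (starRingEnd ℂ))).det) :
    1 - dotProduct (star s)
        (Matrix.mulVec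
          ((K.map (starRingEnd ℂ))⁻¹ * (C.map (starRingEnd ℂ))⁻¹ * (M.map (starRingEnd ℂ))
            * (C - M * (C.map (starRingEnd ℂ))⁻¹ * (M.map (starRingEnd ℂ)))⁻¹ * K⁻¹)
          r)
      = (C + K⁻¹ * M * (K.map (starRingEnd ℂ))⁻¹ * (C.map (starRingEnd ℂ))⁻¹
            * (M.map (starRingEnd ℂ))).det
        / (C - M * (C.map (starRingEnd ℂ))⁻¹ * (M.map (starRingEnd ℂ))).det :=
  stmt_16_general N K C M hK r s hSyl hInv
end
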